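/- arXiv:2602.01524 — 9 statements merged into one kernel-verified Lean document; each statement's English description precedes it below -/
import Mathlib

section
/- Let γ > 0, T > 0, let 0 = t_0 < t_1 < ⋯ < t_N < t_{N+1} = T be real numbers, and let V : [0,T] → ℝ be a nonnegative function with V(0) = 0. Let z : [0,T] → ℝ^p and w : [0,T] → ℝ^q be continuous functions. Suppose that on each open interval (t_k, t_{k+1}) (k ∈ {0,…,N}) V is differentiable and satisfies V′(t) + γ^{-1}·‖z(t)‖² − γ·‖w(t)‖² ≤ 0, that V is right-continuous at each t_k and has a left limit at each t_{k+1}, and that at each switching instant V(t_{k+1}) is at most the left limit of V at t_{k+1}. Then ∫₀ᵀ ‖z(t)‖² dt ≤ γ² · ∫₀ᵀ ‖w(t)‖² dt. -/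
open Matrix

open Set Filter MeasureTheory intervalIntegral

lemma key_interval (a b L : ℝ) (hab : a < b) (V g : ℝ → ℝ)
    (hVa : ContinuousWithinAt V (Set.Ici a) a)
    (hVL : Filter.Tendsto V (nhdsWithin b (Set.Iio b)) (nhds L))
    (hdiff : ∀ s ∈ Set.Ioo a b, DifferentiableAt ℝ V s ∧ deriv V s ≤ g s)
    (hgc : ContinuousOn g (Set.Ioo a b))
    (hgi : IntervalIntegrable g MeasureTheory.volume a b) :
    L ≤ V a + ∫ s in a..b, g s := by
  set W : ℝ → ℝ := fun s => if s < b then V s else L with hW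
  have hWV : ∀ s, s < b → W s = V s := fun s hs => by simp [hW, hs]
  have hWb : W b = L := by simp [hW]
  have hWa : W a = V a := hWV a hab
  have heq : ∀ s, s < b → W =ᶠ[nhds s] V := by
    intro s hs
    filter_upwards [Iio_mem_nhds hs] with x hx using hWV x hx
  set G : ℝ → ℝ := fun s => ∫ x in a..s, g x with hG
  have huIcc : Set.uIcc a b = Set.Icc a b := Set.uIcc_of_le hab.le
  have hGcont : ContinuousOn G (Set.Icc a b) := by
    rw [← huIcc]
    exact intervalIntegral.continuousOn_primitive_interval' hgi Set.left_mem_uIcc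
  have hGderiv : ∀ s ∈ Set.Ioo a b, HasDerivAt G (g s) s := by
    intro s hs
    refine intervalIntegral.integral_hasDerivAt_right
      (hgi.mono_set ?_)
      (hgc.stronglyMeasurableAtFilter isOpen_Ioo s hs)
      (hgc.continuousAt (Ioo_mem_nhds hs.1 hs.2))
    rw [huIcc]
    exact Set.uIcc_subset_Icc ⟨le_refl a, hab.le⟩ ⟨hs.1.le, hs.2.le⟩
  have hWcont : ContinuousOn W (Set.Icc a b) := by
    intro x hx
    rcases eq_or_lt_of_le hx.2 with hxb | hxb
    · subst hxb
      have h1 : ContinuousWithinAt W (Set.Iio x) x := by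
        rw [ContinuousWithinAt, hWb]
        exact hVL.congr' (by
          filter_upwards [self_mem_nhdsWithin] with y hy using (hWV y hy).symm)
      have h2 : ContinuousWithinAt W (insert x (Set.Iio x)) x :=
        h1.insert
      exact h2.mono (fun y hy => by
        rcases eq_or_lt_of_le hy.2 with h | h
        · exact h ▸ Set.mem_insert _ _
        · exact Set.mem_insert_of_mem _ h)
    · have hVx : ContinuousWithinAt V (Set.Icc a b) x := by
        rcases eq_or_lt_of_le hx.1 with hxa | hxa
        · subst hxa
          exact hVa.mono Set.Icc_subset_Ici_self
        · exact ((hdiff x ⟨hxa, hxb⟩).1.continuousAt).continuousWithinAt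
      exact hVx.congr_of_eventuallyEq ((heq x hxb).filter_mono nhdsWithin_le_nhds)
        (hWV x hxb)
  have hWdiff : ∀ s ∈ Set.Ioo a b, DifferentiableAt ℝ W s ∧ deriv W s = deriv V s := by
    intro s hs
    refine ⟨(heq s hs.2).differentiableAt_iff.mpr (hdiff s hs).1, (heq s hs.2).deriv_eq⟩
  set F : ℝ → ℝ := fun s => W s - G s with hF
  have hFcont : ContinuousOn F (Set.Icc a b) := hWcont.sub hGcont
  have hFdiff : DifferentiableOn ℝ F (interior (Set.Icc a b)) := by
    rw [interior_Icc]
    intro s hs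
    exact ((hWdiff s hs).1.sub (hGderiv s hs).differentiableAt).differentiableWithinAt
  have hFderiv : ∀ s ∈ interior (Set.Icc a b), deriv F s ≤ 0 := by
    rw [interior_Icc]
    intro s hs
    rw [hF, deriv_fun_sub (hWdiff s hs).1 (hGderiv s hs).differentiableAt,
      (hGderiv s hs).deriv, (hWdiff s hs).2]
    linarith [(hdiff s hs).2]
  have hanti : AntitoneOn F (Set.Icc a b) :=
    antitoneOn_of_deriv_nonpos (convex_Icc a b) hFcont hFdiff hFderiv
  have := hanti (Set.left_mem_Icc.mpr hab.le) (Set.right_mem_Icc.mpr hab.le) hab.le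
  simp only [hF, hWb, hWa, hG, intervalIntegral.integral_same, sub_zero] at this
  linarith

/-- Dissipation-integration argument for the ℒ₂-gain bound of a switched system:
along each switching interval the storage function `V` satisfies the differential
dissipation inequality `V' + γ⁻¹‖z‖² − γ‖w‖² ≤ 0`, `V` does not increase at
switching instants, starts at zero and is nonnegative; then `∫‖z‖² ≤ γ²∫‖w‖²`.
Here `v ⬝ᵥ v` is the squared Euclidean norm `‖v‖²`. -/
theorem stmt_1
    (γ T : ℝ) (hγ : 0 < γ) (hT : 0 < T)
    (p q N : ℕ) (t : ℕ → ℝ)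
    (ht0 : t 0 = 0) (htN1 : t (N + 1) = T)
    (htmono : ∀ k ≤ N, t k < t (k + 1))
    (V : ℝ → ℝ)
    (hVnonneg : ∀ s ∈ Set.Icc (0 : ℝ) T, 0 ≤ V s)
    (hV0 : V 0 = 0)
    (z : ℝ → (Fin p → ℝ)) (w : ℝ → (Fin q → ℝ))
    (hz : ContinuousOn z (Set.Icc (0 : ℝ) T))
    (hw : ContinuousOn w (Set.Icc (0 : ℝ) T))
    (hdiss : ∀ k ≤ N, ∀ s ∈ Set.Ioo (t k) (t (k + 1)),
      DifferentiableAt ℝ V s ∧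
        deriv V s + γ⁻¹ * (z s ⬝ᵥ z s) - γ * (w s ⬝ᵥ w s) ≤ 0)
    (hrc : ∀ k ≤ N, ContinuousWithinAt V (Set.Ici (t k)) (t k))
    (hjump : ∀ k ≤ N, ∃ L : ℝ,
      Filter.Tendsto V (nhdsWithin (t (k + 1)) (Set.Iio (t (k + 1)))) (nhds L) ∧
        V (t (k + 1)) ≤ L) :
    ∫ s in (0 : ℝ)..T, z s ⬝ᵥ z s ≤ γ ^ 2 * ∫ s in (0 : ℝ)..T, w s ⬝ᵥ w s := by
  -- monotonicity of the switching times
  have tmono : ∀ j k : ℕ, j ≤ k → k ≤ N + 1 → t j ≤ t k := by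
    intro j k hjk hk
    induction k with
    | zero => simp [Nat.le_zero.mp hjk]
    | succ n ih =>
      have hn : n ≤ N := Nat.succ_le_succ_iff.mp hk
      rcases Nat.lt_succ_iff_lt_or_eq.mp (Nat.lt_succ_of_le hjk) with h | h
      · exact le_trans (ih (Nat.lt_succ_iff.mp h) (Nat.le_succ_of_le hn)) (htmono n hn).le
      · exact h ▸ le_refl _
  have htIcc : ∀ k ≤ N + 1, t k ∈ Set.Icc (0 : ℝ) T := by
    intro k hk
    exact ⟨ht0 ▸ tmono 0 k (Nat.zero_le k) hk, htN1 ▸ tmono k (N + 1) hk (le_refl _)⟩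
  -- continuity of the integrands
  have hzz : ContinuousOn (fun s => z s ⬝ᵥ z s) (Set.Icc (0 : ℝ) T) := by
    simp only [dotProduct]
    exact continuousOn_finset_sum _ fun i _ =>
      ((continuous_apply i).comp_continuousOn hz).mul
        ((continuous_apply i).comp_continuousOn hz)
  have hww : ContinuousOn (fun s => w s ⬝ᵥ w s) (Set.Icc (0 : ℝ) T) := by
    simp only [dotProduct]
    exact continuousOn_finset_sum _ fun i _ =>
      ((continuous_apply i).comp_continuousOn hw).mul
        ((continuous_apply i).comp_continuousOn hw)
  set g : ℝ → ℝ := fun s => γ * (w s ⬝ᵥ w s) - γ⁻¹ * (z s ⬝ᵥ z s) with hg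
  have hgc : ContinuousOn g (Set.Icc (0 : ℝ) T) :=
    (continuousOn_const.mul hww).sub (continuousOn_const.mul hzz)
  have hintz : IntervalIntegrable (fun s => z s ⬝ᵥ z s) volume 0 T :=
    (by rwa [Set.uIcc_of_le hT.le] : ContinuousOn _ (Set.uIcc (0:ℝ) T)).intervalIntegrable
  have hintw : IntervalIntegrable (fun s => w s ⬝ᵥ w s) volume 0 T :=
    (by rwa [Set.uIcc_of_le hT.le] : ContinuousOn _ (Set.uIcc (0:ℝ) T)).intervalIntegrable
  have hgint : ∀ j k : ℕ, j ≤ k → k ≤ N + 1 → IntervalIntegrable g volume (t j) (t k) := by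
    intro j k hjk hk
    apply ContinuousOn.intervalIntegrable
    apply hgc.mono
    rw [Set.uIcc_of_le (tmono j k hjk hk)]
    exact Set.Icc_subset_Icc (htIcc j (le_trans hjk hk)).1 (htIcc k hk).2
  -- key bound by induction on the switching index
  have main : ∀ k ≤ N + 1, V (t k) ≤ ∫ s in (t 0)..(t k), g s := by
    intro k hk
    induction k with
    | zero => simp [ht0, hV0]
    | succ n ih =>
      have hn : n ≤ N := Nat.succ_le_succ_iff.mp hk
      obtain ⟨L, hL1, hL2⟩ := hjump n hn
      have hkey : L ≤ V (t n) + ∫ s in (t n)..(t (n + 1)), g s := by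
        refine key_interval (t n) (t (n + 1)) L (htmono n hn) V g (hrc n hn) hL1
          (fun s hs => ⟨(hdiss n hn s hs).1, by have := (hdiss n hn s hs).2; simp only [hg]; linarith⟩)
          (hgc.mono ?_) (hgint n (n + 1) (Nat.le_succ n) hk)
        exact fun x hx => ⟨le_trans (htIcc n (le_trans hn (Nat.le_succ N))).1 hx.1.le,
          le_trans hx.2.le (htIcc (n + 1) hk).2⟩
      have hadd : (∫ s in (t 0)..(t n), g s) + ∫ s in (t n)..(t (n + 1)), g s
          = ∫ s in (t 0)..(t (n + 1)), g s :=
        intervalIntegral.integral_add_adjacent_intervals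
          (hgint 0 n (Nat.zero_le n) (le_trans hn (Nat.le_succ N)))
          (hgint n (n + 1) (Nat.le_succ n) hk)
      have hihn := ih (le_trans hn (Nat.le_succ N))
      linarith
  have hVT := main (N + 1) (le_refl _)
  rw [htN1, ht0] at hVT
  have hVTnn : 0 ≤ V T := hVnonneg T ⟨hT.le, le_refl T⟩
  have hsplit : (∫ s in (0:ℝ)..T, g s)
      = γ * (∫ s in (0:ℝ)..T, w s ⬝ᵥ w s) - γ⁻¹ * (∫ s in (0:ℝ)..T, z s ⬝ᵥ z s) := by
    rw [hg]
    rw [intervalIntegral.integral_sub (hintw.const_mul γ) (hintz.const_mul γ⁻¹),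
      intervalIntegral.integral_const_mul, intervalIntegral.integral_const_mul]
  rw [hsplit] at hVT
  have h1 : γ⁻¹ * (∫ s in (0:ℝ)..T, z s ⬝ᵥ z s) ≤ γ * (∫ s in (0:ℝ)..T, w s ⬝ᵥ w s) := by
    linarith
  have h2 := mul_le_mul_of_nonneg_left h1 hγ.le
  have h3 : γ * (γ⁻¹ * (∫ s in (0:ℝ)..T, z s ⬝ᵥ z s)) = ∫ s in (0:ℝ)..T, z s ⬝ᵥ z s := by
    field_simp
  rw [h3] at h2
  calc ∫ s in (0:ℝ)..T, z s ⬝ᵥ z s ≤ γ * (γ * ∫ s in (0:ℝ)..T, w s ⬝ᵥ w s) := h2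
    _ = γ ^ 2 * ∫ s in (0:ℝ)..T, w s ⬝ᵥ w s := by ring
end

section
/- Let n be a positive integer, λ > 0, and a < b real numbers. Let A : [a,b] → Matrix (Fin n) (Fin n) ℝ, let X : [a,b] → Matrix (Fin n) (Fin n) ℝ be differentiable with X(t) symmetric and positive definite for every t, and let x : [a,b] → ℝⁿ be differentiable with x′(t) = A(t) · x(t) for all t ∈ [a,b]. Suppose that for every t ∈ [a,b] the matrix A(t)ᵀ X(t) + X(t) A(t) + X′(t) + λ X(t) is negative semidefinite. Then for all t ∈ [a,b], x(t)ᵀ X(t) x(t) ≤ e^{−λ(t−a)} · x(a)ᵀ X(a) x(a). -/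
open Matrix

/-- Within-interval exponential decay step of the switched LPV stability proof:
for the linear time-varying system `ẋ = A(t)x` with time-varying quadratic
Lyapunov function `V(t) = x(t)ᵀX(t)x(t)` (with `X` differentiable, derivative
`X'`), the matrix inequality `AᵀX + XA + X' + λX ⪯ 0` implies
`V(t) ≤ exp(−λ(t−a)) V(a)` on `[a,b]`. -/
theorem stmt_2
    (n : ℕ) (hn : 0 < n) (lam a b : ℝ) (hlam : 0 < lam) (hab : a < b)
    (A X X' : ℝ → Matrix (Fin n) (Fin n) ℝ)
    (x : ℝ → (Fin n → ℝ))
    (hXderiv : ∀ t ∈ Set.Icc a b, ∀ i j, HasDerivAt (fun s => X s i j) (X' t i j) t)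
    (hXsym : ∀ t ∈ Set.Icc a b, (X t)ᵀ = X t)
    (hXpd : ∀ t ∈ Set.Icc a b, ∀ v : Fin n → ℝ, v ≠ 0 → 0 < v ⬝ᵥ (X t).mulVec v)
    (hx : ∀ t ∈ Set.Icc a b, HasDerivAt x ((A t).mulVec (x t)) t)
    (hLMI : ∀ t ∈ Set.Icc a b, ∀ v : Fin n → ℝ,
      v ⬝ᵥ ((A t)ᵀ * X t + X t * A t + X' t + lam • X t).mulVec v ≤ 0) :
    ∀ t ∈ Set.Icc a b,
      x t ⬝ᵥ (X t).mulVec (x t) ≤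
        Real.exp (-lam * (t - a)) * (x a ⬝ᵥ (X a).mulVec (x a)) := by
  set V : ℝ → ℝ := fun s => x s ⬝ᵥ (X s).mulVec (x s) with hVdef
  -- derivative of V
  have hVd : ∀ t ∈ Set.Icc a b, HasDerivAt V
      (x t ⬝ᵥ (((A t)ᵀ * X t + X t * A t + X' t).mulVec (x t))) t := by
    intro t ht
    have hxi : ∀ i, HasDerivAt (fun s => x s i) ((A t).mulVec (x t) i) t :=
      fun i => (hasDerivAt_pi.mp (hx t ht)) i
    have key : HasDerivAt (fun s => ∑ i, ∑ j, x s i * (X s i j * x s j))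
        (∑ i, ∑ j, ((A t).mulVec (x t) i * (X t i j * x t j) +
          x t i * (X' t i j * x t j + X t i j * (A t).mulVec (x t) j))) t := by
      apply HasDerivAt.fun_sum; intro i _
      apply HasDerivAt.fun_sum; intro j _
      exact (hxi i).mul ((hXderiv t ht i j).mul (hxi j))
    have hfun : (fun s => ∑ i, ∑ j, x s i * (X s i j * x s j)) = V := by
      funext s
      simp [hVdef, dotProduct, Matrix.mulVec, Finset.mul_sum]
    have hval : (∑ i, ∑ j, ((A t).mulVec (x t) i * (X t i j * x t j) +
          x t i * (X' t i j * x t j + X t i j * (A t).mulVec (x t) j)))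
        = x t ⬝ᵥ (((A t)ᵀ * X t + X t * A t + X' t).mulVec (x t)) := by
      rw [Matrix.add_mulVec, Matrix.add_mulVec, dotProduct_add,
        dotProduct_add, ← Matrix.mulVec_mulVec, ← Matrix.mulVec_mulVec,
        Matrix.dotProduct_mulVec (x t) ((A t)ᵀ), Matrix.vecMul_transpose]
      generalize A t *ᵥ x t = y
      simp [dotProduct, Matrix.mulVec, Finset.mul_sum, Finset.sum_add_distrib, mul_add]
      ring_nf
    rw [← hfun, ← hval] at *
    exact key
  -- the derivative bound
  have hVineq : ∀ t ∈ Set.Icc a b,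
      x t ⬝ᵥ (((A t)ᵀ * X t + X t * A t + X' t).mulVec (x t)) ≤ -lam * V t := by
    intro t ht
    have := hLMI t ht (x t)
    rw [Matrix.add_mulVec, dotProduct_add, Matrix.smul_mulVec,
      dotProduct_smul] at this
    simp only [smul_eq_mul] at this
    have : x t ⬝ᵥ (((A t)ᵀ * X t + X t * A t + X' t).mulVec (x t))
        + lam * (x t ⬝ᵥ (X t).mulVec (x t)) ≤ 0 := this
    simp only [hVdef]; linarith
  -- define g and show it's antitone
  set g : ℝ → ℝ := fun s => Real.exp (lam * (s - a)) * V s with hgdef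
  have hgd : ∀ t ∈ Set.Icc a b, HasDerivAt g
      (lam * Real.exp (lam * (t - a)) * V t +
        Real.exp (lam * (t - a)) *
          (x t ⬝ᵥ (((A t)ᵀ * X t + X t * A t + X' t).mulVec (x t)))) t := by
    intro t ht
    have he : HasDerivAt (fun s => Real.exp (lam * (s - a))) (lam * Real.exp (lam * (t - a))) t := by
      have h1 : HasDerivAt (fun s : ℝ => lam * (s - a)) lam t := by
        simpa using (((hasDerivAt_id t).sub_const a).const_mul lam)
      have := (Real.hasDerivAt_exp (lam * (t - a))).comp t h1
      simpa [mul_comm, Function.comp_def] using this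
    exact he.mul (hVd t ht)
  have hanti : AntitoneOn g (Set.Icc a b) := by
    apply antitoneOn_of_deriv_nonpos (convex_Icc a b)
    · intro t ht; exact ((hgd t ht).continuousAt).continuousWithinAt
    · intro t ht
      rw [interior_Icc] at ht
      exact ((hgd t (Set.mem_Icc_of_Ioo ht)).differentiableAt).differentiableWithinAt
    · intro t ht
      rw [interior_Icc] at ht
      have ht' := Set.mem_Icc_of_Ioo ht
      rw [(hgd t ht').deriv]
      have h1 := hVineq t ht'
      have h2 : (0:ℝ) ≤ Real.exp (lam * (t - a)) := (Real.exp_pos _).le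
      nlinarith [Real.exp_pos (lam * (t - a))]
  -- conclude
  intro t ht
  have hga : g a = V a := by simp [hgdef]
  have hgt : g t ≤ g a := hanti (Set.left_mem_Icc.mpr hab.le) ht ht.1
  rw [hga] at hgt
  have hmul := mul_le_mul_of_nonneg_left hgt (Real.exp_pos (-lam * (t - a))).le
  have hkey : Real.exp (-lam * (t - a)) * g t = V t := by
    simp only [hgdef]
    rw [← mul_assoc, ← Real.exp_add]
    ring_nf
    simp
  rw [hkey] at hmul
  exact hmul
end

section
/- Let K ⊂ ℝ^s be a nonempty compact set, and let F, X : K → Matrix (Fin n) (Fin n) ℝ be continuous maps such that for every ρ ∈ K, F(ρ) is symmetric and negative definite and X(ρ) is symmetric and positive definite. Then there exists λ > 0 such that for every ρ ∈ K the matrix F(ρ) + λ·X(ρ) is negative semidefinite. -/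
open Matrix

lemma quad_smul {n : ℕ} (A : Matrix (Fin n) (Fin n) ℝ) (c : ℝ) (v : Fin n → ℝ) :
    (c • v) ⬝ᵥ A.mulVec (c • v) = c ^ 2 * (v ⬝ᵥ A.mulVec v) := by
  rw [Matrix.mulVec_smul, smul_dotProduct, dotProduct_smul,
    smul_eq_mul, smul_eq_mul]
  ring

/-- Compactness argument in the switched LPV stability proof: continuous families
of symmetric negative-definite matrices `F(ρ)` and symmetric positive-definite
matrices `X(ρ)` over a nonempty compact parameter set `K ⊂ ℝˢ` admit a uniform
`λ > 0` with `F(ρ) + λX(ρ) ⪯ 0` for all `ρ ∈ K`. -/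
theorem stmt_3
    (s n : ℕ) (hn : 0 < n)
    (K : Set (Fin s → ℝ)) (hKne : K.Nonempty) (hKc : IsCompact K)
    (F X : (Fin s → ℝ) → Matrix (Fin n) (Fin n) ℝ)
    (hFcont : ContinuousOn F K) (hXcont : ContinuousOn X K)
    (hFsym : ∀ ρ ∈ K, (F ρ)ᵀ = F ρ)
    (hFnd : ∀ ρ ∈ K, ∀ v : Fin n → ℝ, v ≠ 0 → v ⬝ᵥ (F ρ).mulVec v < 0)
    (hXsym : ∀ ρ ∈ K, (X ρ)ᵀ = X ρ)
    (hXpd : ∀ ρ ∈ K, ∀ v : Fin n → ℝ, v ≠ 0 → 0 < v ⬝ᵥ (X ρ).mulVec v) :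
    ∃ lam : ℝ, 0 < lam ∧
      ∀ ρ ∈ K, ∀ v : Fin n → ℝ, v ⬝ᵥ (F ρ + lam • X ρ).mulVec v ≤ 0 := by
  haveI : Nonempty (Fin n) := ⟨⟨0, hn⟩⟩
  set S : Set (Fin n → ℝ) := Metric.sphere 0 1 with hS
  have hSc : IsCompact S := isCompact_sphere 0 1
  have hSne : S.Nonempty := NormedSpace.sphere_nonempty.mpr zero_le_one
  have hTc : IsCompact (K ×ˢ S) := hKc.prod hSc
  have hTne : (K ×ˢ S).Nonempty := hKne.prod hSne
  -- continuity of quadratic forms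
  have hq : Continuous (fun q : Matrix (Fin n) (Fin n) ℝ × (Fin n → ℝ) =>
      q.2 ⬝ᵥ q.1.mulVec q.2) := by
    simp only [dotProduct, Matrix.mulVec]
    apply continuous_finset_sum
    intro i _
    exact ((continuous_apply i).comp continuous_snd).mul
      (continuous_finset_sum _ fun j _ =>
        ((continuous_apply_apply i j).comp continuous_fst).mul
          ((continuous_apply j).comp continuous_snd))
  have hFq : ContinuousOn (fun p : (Fin s → ℝ) × (Fin n → ℝ) =>
      p.2 ⬝ᵥ (F p.1).mulVec p.2) (K ×ˢ S) := by
    exact hq.comp_continuousOn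
      ((hFcont.comp continuous_fst.continuousOn (fun p hp => hp.1)).prodMk
        continuous_snd.continuousOn)
  have hXq : ContinuousOn (fun p : (Fin s → ℝ) × (Fin n → ℝ) =>
      p.2 ⬝ᵥ (X p.1).mulVec p.2) (K ×ˢ S) := by
    exact hq.comp_continuousOn
      ((hXcont.comp continuous_fst.continuousOn (fun p hp => hp.1)).prodMk
        continuous_snd.continuousOn)
  have hvne : ∀ v ∈ S, v ≠ 0 := by
    intro v hv h0
    simp [hS, h0] at hv
  -- minimum of -vFv
  obtain ⟨p₀, hp₀, hmin⟩ := hTc.exists_isMinOn hTne hFq.neg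
  obtain ⟨p₁, hp₁, hmax⟩ := hTc.exists_isMaxOn hTne hXq
  set c : ℝ := -(p₀.2 ⬝ᵥ (F p₀.1).mulVec p₀.2) with hc
  set M : ℝ := p₁.2 ⬝ᵥ (X p₁.1).mulVec p₁.2 with hM
  have hcpos : 0 < c := by
    have := hFnd p₀.1 hp₀.1 p₀.2 (hvne _ hp₀.2)
    linarith
  have hMpos : 0 < M := hXpd p₁.1 hp₁.1 p₁.2 (hvne _ hp₁.2)
  refine ⟨c / M, div_pos hcpos hMpos, ?_⟩
  intro ρ hρ v
  have key : ∀ u ∈ S, u ⬝ᵥ (F ρ).mulVec u + (c / M) * (u ⬝ᵥ (X ρ).mulVec u) ≤ 0 := by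
    intro u hu
    have h1 : c ≤ -(u ⬝ᵥ (F ρ).mulVec u) := hmin (Set.mk_mem_prod hρ hu)
    have h2 : u ⬝ᵥ (X ρ).mulVec u ≤ M := hmax (Set.mk_mem_prod hρ hu)
    have h3 : 0 < u ⬝ᵥ (X ρ).mulVec u := hXpd ρ hρ u (hvne _ hu)
    have h4 : (c / M) * (u ⬝ᵥ (X ρ).mulVec u) ≤ (c / M) * M :=
      mul_le_mul_of_nonneg_left h2 (le_of_lt (div_pos hcpos hMpos))
    rw [div_mul_cancel₀ _ (ne_of_gt hMpos)] at h4
    linarith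
  rw [Matrix.add_mulVec, dotProduct_add, Matrix.smul_mulVec,
    dotProduct_smul, smul_eq_mul]
  rcases eq_or_ne v 0 with rfl | hv0
  · simp
  · have hnv : ‖v‖ ≠ 0 := norm_ne_zero_iff.mpr hv0
    set u : Fin n → ℝ := ‖v‖⁻¹ • v with hu
    have huS : u ∈ S := by
      simp [hS, hu, norm_smul, abs_of_nonneg (inv_nonneg.mpr (norm_nonneg v)),
        inv_mul_cancel₀ hnv]
    have hvu : v = ‖v‖ • u := by
      rw [hu, smul_smul, mul_inv_cancel₀ hnv, one_smul]
    have hFs : ‖v‖ ^ 2 * (u ⬝ᵥ (F ρ).mulVec u) = v ⬝ᵥ (F ρ).mulVec v := by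
      rw [hu, quad_smul]
      field_simp
    have hXs : ‖v‖ ^ 2 * (u ⬝ᵥ (X ρ).mulVec u) = v ⬝ᵥ (X ρ).mulVec v := by
      rw [hu, quad_smul]
      field_simp
    have hk := key u huS
    have hsq : (0:ℝ) ≤ ‖v‖ ^ 2 := sq_nonneg _
    have h5 := mul_le_mul_of_nonneg_left hk hsq
    rw [mul_zero] at h5
    have heq : ‖v‖ ^ 2 * (u ⬝ᵥ (F ρ).mulVec u + c / M * (u ⬝ᵥ (X ρ).mulVec u))
        = ‖v‖ ^ 2 * (u ⬝ᵥ (F ρ).mulVec u)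
          + c / M * (‖v‖ ^ 2 * (u ⬝ᵥ (X ρ).mulVec u)) := by ring
    rw [heq, hFs, hXs] at h5
    exact h5
end

section
/- Let n be a positive integer, let R and S be symmetric n×n real matrices such that the block matrix fromBlocks R I I S is positive definite, and let M, N be invertible n×n real matrices with M·Nᵀ = I − R·S. Define Z₁ = fromBlocks R I Mᵀ 0 and Z₂ = fromBlocks I S 0 Nᵀ. Then Z₁ is invertible, and the matrix X = Z₂ · Z₁⁻¹ is symmetric and positive definite. -/
open Matrix

lemma aux_congr_posdef {m : Type*} [Fintype m] [DecidableEq m] (A B : Matrix m m ℝ)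
    (hA : A.PosDef) (hB : IsUnit B) : (Bᵀ * A * B).PosDef := by
  rw [Matrix.posDef_iff_dotProduct_mulVec] at hA ⊢
  constructor
  · have := Matrix.isHermitian_conjTranspose_mul_mul B hA.1
    simpa using this
  · intro x hx
    have hBx : B *ᵥ x ≠ 0 := fun h => hx (Matrix.mulVec_injective_iff_isUnit.2 hB (h.trans (Matrix.mulVec_zero B).symm))
    have h2 := hA.2 (x := B *ᵥ x) hBx
    have e : star x ⬝ᵥ (Bᵀ * A * B) *ᵥ x = star (B *ᵥ x) ⬝ᵥ A *ᵥ (B *ᵥ x) := by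
      simp only [star_trivial]
      rw [Matrix.dotProduct_mulVec, ← Matrix.vecMul_vecMul, ← Matrix.vecMul_vecMul,
        Matrix.vecMul_transpose, ← Matrix.dotProduct_mulVec, ← Matrix.dotProduct_mulVec]
    rw [e]; exact h2

set_option maxHeartbeats 1000000 in
/-- Lyapunov-matrix completion step in LPV output-feedback synthesis: from
symmetric `R, S` with the coupling condition `[[R, I],[I, S]] ≻ 0` and invertible
factors `M, N` with `MNᵀ = I − RS`, the matrix `Z₁ = [[R, I],[Mᵀ, 0]]` is
invertible and `X = Z₂·Z₁⁻¹` (with `Z₂ = [[I, S],[0, Nᵀ]]`) is symmetric positive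
definite. -/
theorem stmt_6
    (n : ℕ) (hn : 0 < n)
    (R S M N : Matrix (Fin n) (Fin n) ℝ)
    (hR : Rᵀ = R) (hS : Sᵀ = S)
    (hpd : (Matrix.fromBlocks R 1 1 S).PosDef)
    (hM : IsUnit M) (hN : IsUnit N)
    (hMN : M * Nᵀ = 1 - R * S) :
    IsUnit (Matrix.fromBlocks R 1 Mᵀ (0 : Matrix (Fin n) (Fin n) ℝ)) ∧
      (Matrix.fromBlocks 1 S 0 Nᵀ *
        (Matrix.fromBlocks R 1 Mᵀ (0 : Matrix (Fin n) (Fin n) ℝ))⁻¹).PosDef := by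
  set Z₁ := Matrix.fromBlocks R 1 Mᵀ (0 : Matrix (Fin n) (Fin n) ℝ) with hZ₁
  set Z₂ := Matrix.fromBlocks (1 : Matrix (Fin n) (Fin n) ℝ) S 0 Nᵀ with hZ₂
  have key : Z₁ᵀ * Z₂ = Matrix.fromBlocks R 1 1 S := by
    have h1 : R * S + M * Nᵀ = 1 := by rw [hMN, add_sub_cancel]
    rw [hZ₁, hZ₂, Matrix.fromBlocks_transpose, Matrix.fromBlocks_multiply,
      Matrix.transpose_one, Matrix.transpose_zero, Matrix.transpose_transpose, hR]
    simp [h1]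
  have hPunit : IsUnit (Matrix.fromBlocks R 1 1 S) := hpd.isUnit
  have hdet : IsUnit (Z₁.det * Z₂.det) := by
    have : IsUnit ((Z₁ᵀ * Z₂).det) := (Matrix.isUnit_iff_isUnit_det _).1 (key ▸ hPunit)
    simpa [Matrix.det_mul, Matrix.det_transpose] using this
  have hZ₁u : IsUnit Z₁ := (Matrix.isUnit_iff_isUnit_det _).2 (isUnit_of_mul_isUnit_left hdet)
  refine ⟨hZ₁u, ?_⟩
  have hinv : IsUnit Z₁⁻¹ := Matrix.isUnit_nonsing_inv_iff.2 hZ₁u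
  have hX : Z₂ * Z₁⁻¹ = (Z₁⁻¹)ᵀ * (Matrix.fromBlocks R 1 1 S) * Z₁⁻¹ := by
    rw [← key, Matrix.transpose_nonsing_inv]
    rw [← mul_assoc, Matrix.nonsing_inv_mul _ (by simpa [Matrix.det_transpose] using (Matrix.isUnit_iff_isUnit_det _).1 hZ₁u), one_mul]
  rw [hX]
  exact aux_congr_posdef (Matrix.fromBlocks R 1 1 S) Z₁⁻¹ hpd hinv
end

section
/- Let n be a positive integer and let R and S be symmetric n×n real matrices such that the block matrix fromBlocks R I I S is positive definite. Then the matrix I − R·S is invertible. -/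
open Matrix

/-- In LPV output-feedback synthesis, the coupling LMI `[[R, I],[I, S]] ≻ 0` for
symmetric `R, S` guarantees that `I − RS` is invertible. -/
theorem stmt_7
    (n : ℕ) (hn : 0 < n)
    (R S : Matrix (Fin n) (Fin n) ℝ)
    (hR : Rᵀ = R) (hS : Sᵀ = S)
    (hpd : (Matrix.fromBlocks R 1 1 S).PosDef) :
    IsUnit ((1 : Matrix (Fin n) (Fin n) ℝ) - R * S) := by
  -- S is positive definite
  have hSherm : S.IsHermitian := by
    rwa [Matrix.IsHermitian, conjTranspose_eq_transpose_of_trivial]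
  have hSpd : S.PosDef := by
    refine Matrix.PosDef.of_dotProduct_mulVec_pos hSherm (fun x hx => ?_)
    have hv : (Sum.elim 0 x : Fin n ⊕ Fin n → ℝ) ≠ 0 := by
      intro h
      apply hx
      ext i
      exact congrFun h (Sum.inr i)
    have := hpd.dotProduct_mulVec_pos hv
    simpa [Matrix.fromBlocks_mulVec, dotProduct, Fintype.sum_sum_type] using this
  haveI : Invertible S := hSpd.isUnit.invertible
  -- the Schur complement R - S⁻¹ is positive definite
  have h1 : (fromBlocks R (1 : Matrix (Fin n) (Fin n) ℝ)
      (1 : Matrix (Fin n) (Fin n) ℝ)ᴴ S).PosDef := by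
    simpa using hpd
  have hA : (R - S⁻¹).PosDef := by
    refine Matrix.PosDef.of_dotProduct_mulVec_pos ?_ (fun x hx => ?_)
    · have : R.IsHermitian := by
        rwa [Matrix.IsHermitian, conjTranspose_eq_transpose_of_trivial]
      exact this.sub hSherm.inv
    · set y : Fin n → ℝ := -((S⁻¹ * (1 : Matrix (Fin n) (Fin n) ℝ)ᴴ) *ᵥ x) with hy
      have hv : (Sum.elim x y : Fin n ⊕ Fin n → ℝ) ≠ 0 := by
        intro h
        apply hx
        ext i
        exact congrFun h (Sum.inl i)
      have hpos := h1.dotProduct_mulVec_pos hv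
      have heq := schur_complement_eq₂₂ R (1 : Matrix (Fin n) (Fin n) ℝ) x y hSherm
      rw [Matrix.dotProduct_mulVec, heq, hy, add_neg_cancel] at hpos
      simpa [Matrix.dotProduct_mulVec] using hpos
  haveI : Invertible (R - S⁻¹) := hA.isUnit.invertible
  have key : (1 : Matrix (Fin n) (Fin n) ℝ) - R * S = -((R - S⁻¹) * S) := by
    rw [Matrix.sub_mul, Matrix.nonsing_inv_mul S (isUnit_iff_isUnit_det S |>.1 hSpd.isUnit)]
    noncomm_ring
  rw [key]
  exact (hA.isUnit.mul hSpd.isUnit).neg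
end

section
/- Let n be a positive integer. Let R_i, S_i, M_i, N_i and R_j, S_j, M_j, N_j be n×n real matrices, and let Δ be an n×n real matrix. Define Z₁ᵢ = fromBlocks R_i I M_iᵀ 0, Z₂ⱼ = fromBlocks I S_j 0 N_jᵀ, Z₁ⱼ = fromBlocks R_j I M_jᵀ 0, and A_r = fromBlocks I 0 0 Δ. Let X_j be a symmetric 2n×2n real matrix with X_j · Z₁ⱼ = Z₂ⱼ. Then Z₁ⱼᵀ · X_j · A_r · Z₁ᵢ = fromBlocks R_i I (S_j·R_i + N_j·Δ·M_iᵀ) S_j. -/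
open Matrix

/-!
Transposing `X Z₁ = Z₂` with `X` symmetric gives `Z₁ᵀ X = Z₂ᵀ`, which removes the unknown `X`
from the product. Then `Z₁ᵀ X Z₁ = Z₂ᵀ Z₁ = Z₁ᵀ Z₂` is symmetric, and its lower-right block is
`S`, so `S` is symmetric; the rest is block multiplication.
-/

namespace Matrix

variable {m n α : Type*} [Fintype m] [CommRing α]

theorem transpose_mul_eq_transpose_of_mul_eq {X : Matrix m m α} {Z W : Matrix m n α}
    (hX : X.IsSymm) (h : X * Z = W) : Zᵀ * X = Wᵀ := by
  rw [← h, transpose_mul, hX.eq]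

theorem IsSymm.transpose_mul_mul {X : Matrix m m α} (hX : X.IsSymm) (Z : Matrix m n α) :
    (Zᵀ * X * Z).IsSymm := by
  rw [IsSymm, transpose_mul, transpose_mul, transpose_transpose, hX.eq, Matrix.mul_assoc]

variable [Fintype n] [DecidableEq n]

theorem isSymm_of_mul_fromBlocks_eq {X : Matrix (n ⊕ m) (n ⊕ m) α}
    {R S : Matrix n n α} {M N : Matrix n m α} (hX : X.IsSymm)
    (h : X * fromBlocks R 1 Mᵀ (0 : Matrix m n α) = fromBlocks 1 S (0 : Matrix m n α) Nᵀ) :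
    S.IsSymm := by
  have hsymm := hX.transpose_mul_mul (fromBlocks R 1 Mᵀ (0 : Matrix m n α))
  rw [Matrix.mul_assoc, h, fromBlocks_transpose, Matrix.fromBlocks_multiply] at hsymm
  simpa using (isSymm_fromBlocks_iff.mp hsymm).2.2.2

theorem fromBlocks_transpose_mul_fromBlocks_one_zero_zero_mul [DecidableEq m]
    (R S : Matrix n n α) (M N : Matrix n m α) (Δ : Matrix m m α) :
    (fromBlocks 1 S (0 : Matrix m n α) Nᵀ)ᵀ * fromBlocks (1 : Matrix n n α) 0 0 Δ *
        fromBlocks R 1 Mᵀ (0 : Matrix m n α) =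
      fromBlocks R 1 (Sᵀ * R + N * Δ * Mᵀ) Sᵀ := by
  rw [fromBlocks_transpose, Matrix.fromBlocks_multiply, Matrix.fromBlocks_multiply]
  simp [Matrix.mul_assoc]

end Matrix

theorem stmt_8_general
    (n : ℕ)
    (Ri Mi Rj Sj Mj Nj Δ : Matrix (Fin n) (Fin n) ℝ)
    (Xj : Matrix (Fin n ⊕ Fin n) (Fin n ⊕ Fin n) ℝ)
    (hXjsym : Xjᵀ = Xj)
    (hXj : Xj * Matrix.fromBlocks Rj 1 Mjᵀ 0 = Matrix.fromBlocks 1 Sj 0 Njᵀ) :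
    (Matrix.fromBlocks Rj 1 Mjᵀ 0)ᵀ * Xj * Matrix.fromBlocks 1 0 0 Δ *
        Matrix.fromBlocks Ri 1 Miᵀ 0 =
      Matrix.fromBlocks Ri 1 (Sj * Ri + Nj * Δ * Miᵀ) Sj := by
  have hSj : Sjᵀ = Sj := (isSymm_of_mul_fromBlocks_eq hXjsym hXj).eq
  rw [transpose_mul_eq_transpose_of_mul_eq hXjsym hXj,
    fromBlocks_transpose_mul_fromBlocks_one_zero_zero_mul, hSj]

/-- Block-matrix identity linearizing the Lyapunov boundary condition at a
controller switching surface: with the change of variables `X_j·Z₁ⱼ = Z₂ⱼ` and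
the closed-loop reset matrix `A_r = diag(I, Δ)`, one has
`Z₁ⱼᵀ·X_j·A_r·Z₁ᵢ = [[R_i, I],[S_j·R_i + N_j·Δ·M_iᵀ, S_j]]`. -/
theorem stmt_8
    (n : ℕ) (hn : 0 < n)
    (Ri Si Mi Ni Rj Sj Mj Nj Δ : Matrix (Fin n) (Fin n) ℝ)
    (Xj : Matrix (Fin n ⊕ Fin n) (Fin n ⊕ Fin n) ℝ)
    (hXjsym : Xjᵀ = Xj)
    (hXj : Xj * Matrix.fromBlocks Rj 1 Mjᵀ 0 = Matrix.fromBlocks 1 Sj 0 Njᵀ) :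
    (Matrix.fromBlocks Rj 1 Mjᵀ 0)ᵀ * Xj * Matrix.fromBlocks 1 0 0 Δ *
        Matrix.fromBlocks Ri 1 Miᵀ 0 =
      Matrix.fromBlocks Ri 1 (Sj * Ri + Nj * Δ * Miᵀ) Sj :=
  stmt_8_general n Ri Mi Rj Sj Mj Nj Δ Xj hXjsym hXj
end

section
/- Let n be a positive integer. Let R_i, S_i, R_j, S_j be symmetric n×n real matrices, M_i, N_i, M_j, N_j invertible n×n real matrices with M_i·N_iᵀ = I − R_i·S_i and M_j·N_jᵀ = I − R_j·S_j, and Δ an n×n real matrix. Define Z₁ᵢ = fromBlocks R_i I M_iᵀ 0, Z₂ᵢ = fromBlocks I S_i 0 N_iᵀ, and analogously Z₁ⱼ, Z₂ⱼ; let X_i, X_j be symmetric 2n×2n real matrices with X_i·Z₁ᵢ = Z₂ᵢ and X_j·Z₁ⱼ = Z₂ⱼ; let A_r = fromBlocks I 0 0 Δ and Δ̂ = S_j·R_i + N_j·Δ·M_iᵀ. Then the 4n×4n block matrix fromBlocks X_i (A_rᵀ·X_j) (X_j·A_r) X_j is positive semidefinite if and only if the 4n×4n matrix with n×n blocks [[R_i,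 I, R_i, Δ̂ᵀ],[I, S_i, I, S_j],[R_i, I, R_j, I],[Δ̂, S_j, I, S_j]] is positive semidefinite. -/
/-!
With `Z₁ = [[R, I], [Mᵀ, 0]]` invertible (because `M` is), the congruence by `diag(Z₁ᵢ, Z₁ⱼ)`
preserves nonnegativity of the quadratic form. The change of variables `X Z₁ = Z₂` makes every
block of the congruent matrix computable from `Z₂` alone: `Z₁ᵀ X Z₁ = Z₁ᵀ Z₂ = [[R, I], [I, S]]`
using `MNᵀ = I - RS`, and the off-diagonal block `Z₁ᵢᵀ A_rᵀ Z₂ⱼ` produces `Δ̂`.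
-/

open Matrix

namespace Matrix

variable {m n R : Type*} [Fintype m] [DecidableEq m] [Fintype n] [DecidableEq n] [CommRing R]

theorem forall_dotProduct_mulVec_conj_nonneg_iff [LE R] {M Z : Matrix m m R} (hZ : IsUnit Z) :
    (∀ v, 0 ≤ v ⬝ᵥ (Zᵀ * M * Z) *ᵥ v) ↔ ∀ v, 0 ≤ v ⬝ᵥ M *ᵥ v := by
  have hquad : ∀ v, v ⬝ᵥ (Zᵀ * M * Z) *ᵥ v = (Z *ᵥ v) ⬝ᵥ M *ᵥ (Z *ᵥ v) := fun v => by
    rw [← mulVec_mulVec, ← mulVec_mulVec, dotProduct_mulVec, vecMul_transpose]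
  simp only [hquad]
  exact ((mulVec_surjective_iff_isUnit.2 hZ).forall (p := fun w => 0 ≤ w ⬝ᵥ M *ᵥ w)).symm

theorem isUnit_fromBlocks_one_zero (A : Matrix n n R) {M : Matrix n n R} (hM : IsUnit M) :
    IsUnit (fromBlocks A 1 M 0 : Matrix (n ⊕ n) (n ⊕ n) R) := by
  have hswap : (fromBlocks 0 1 1 0 * fromBlocks 0 1 1 0 : Matrix (n ⊕ n) (n ⊕ n) R) = 1 := by
    simp [fromBlocks_multiply]
  have hfactor : (fromBlocks A 1 M 0 : Matrix (n ⊕ n) (n ⊕ n) R) =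
      fromBlocks 1 A 0 M * fromBlocks 0 1 1 0 := by
    simp [fromBlocks_multiply]
  rw [hfactor]
  exact (isUnit_fromBlocks_zero₂₁.2 ⟨isUnit_one, hM⟩).mul (.of_mul_eq_one _ hswap)

theorem fromBlocks_diag_transpose_mul_mul (P Q A B C D : Matrix n n R) :
    (fromBlocks P 0 0 Q)ᵀ * fromBlocks A B C D * fromBlocks P 0 0 Q =
      fromBlocks (Pᵀ * A * P) (Pᵀ * B * Q) (Qᵀ * C * P) (Qᵀ * D * Q) := by
  simp [fromBlocks_transpose, fromBlocks_multiply]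

end Matrix

namespace HysteresisLMI

variable {n : Type*} [Fintype n] [DecidableEq n] {R : Type*} [CommRing R]

theorem diag_block {A S M N : Matrix n n R} {X : Matrix (n ⊕ n) (n ⊕ n) R} (hA : Aᵀ = A)
    (hMN : M * Nᵀ = 1 - A * S) (hX : X * fromBlocks A 1 Mᵀ 0 = fromBlocks 1 S 0 Nᵀ) :
    (fromBlocks A 1 Mᵀ 0)ᵀ * X * fromBlocks A 1 Mᵀ 0 = fromBlocks A 1 1 S := by
  rw [Matrix.mul_assoc, hX, fromBlocks_transpose, fromBlocks_multiply]
  simp [hA, hMN]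

theorem offDiag_block₁₂ {Ai Mi Aj Sj Mj Nj Δ : Matrix n n R} {Xj : Matrix (n ⊕ n) (n ⊕ n) R}
    (hAi : Aiᵀ = Ai) (hSj : Sjᵀ = Sj)
    (hXj : Xj * fromBlocks Aj 1 Mjᵀ 0 = fromBlocks 1 Sj 0 Njᵀ) :
    (fromBlocks Ai 1 Miᵀ 0)ᵀ * ((fromBlocks 1 0 0 Δ)ᵀ * Xj) * fromBlocks Aj 1 Mjᵀ 0 =
      fromBlocks Ai (Sj * Ai + Nj * Δ * Miᵀ)ᵀ 1 Sj := by
  rw [Matrix.mul_assoc, Matrix.mul_assoc, hXj, fromBlocks_transpose, fromBlocks_transpose,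
    fromBlocks_multiply, fromBlocks_multiply]
  simp [transpose_mul, hAi, hSj, Matrix.mul_assoc]

theorem offDiag_block₂₁ {Ai Mi Aj Sj Mj Nj Δ : Matrix n n R} {Xj : Matrix (n ⊕ n) (n ⊕ n) R}
    (hAi : Aiᵀ = Ai) (hSj : Sjᵀ = Sj) (hXjsymm : Xjᵀ = Xj)
    (hXj : Xj * fromBlocks Aj 1 Mjᵀ 0 = fromBlocks 1 Sj 0 Njᵀ) :
    (fromBlocks Aj 1 Mjᵀ 0)ᵀ * (Xj * fromBlocks 1 0 0 Δ) * fromBlocks Ai 1 Miᵀ 0 =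
      fromBlocks Ai 1 (Sj * Ai + Nj * Δ * Miᵀ) Sj := by
  have h := congrArg transpose (offDiag_block₁₂ (Mi := Mi) (Δ := Δ) hAi hSj hXj)
  simpa [transpose_mul, fromBlocks_transpose, hAi, hSj, hXjsymm, Matrix.mul_assoc] using h

end HysteresisLMI

open HysteresisLMI in
theorem stmt_9_general
    (n : ℕ)
    (Ri Si Mi Ni Rj Sj Mj Nj Δ : Matrix (Fin n) (Fin n) ℝ)
    (hRi : Riᵀ = Ri) (hRj : Rjᵀ = Rj) (hSj : Sjᵀ = Sj)
    (hMi : IsUnit Mi) (hMj : IsUnit Mj)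
    (hMNi : Mi * Niᵀ = 1 - Ri * Si) (hMNj : Mj * Njᵀ = 1 - Rj * Sj)
    (Xi Xj : Matrix (Fin n ⊕ Fin n) (Fin n ⊕ Fin n) ℝ)
    (hXjsym : Xjᵀ = Xj)
    (hXi : Xi * Matrix.fromBlocks Ri 1 Miᵀ 0 = Matrix.fromBlocks 1 Si 0 Niᵀ)
    (hXj : Xj * Matrix.fromBlocks Rj 1 Mjᵀ 0 = Matrix.fromBlocks 1 Sj 0 Njᵀ) :
    (∀ v : (Fin n ⊕ Fin n) ⊕ (Fin n ⊕ Fin n) → ℝ,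
        0 ≤ v ⬝ᵥ (Matrix.fromBlocks Xi
            ((Matrix.fromBlocks 1 0 0 Δ)ᵀ * Xj)
            (Xj * Matrix.fromBlocks 1 0 0 Δ) Xj).mulVec v) ↔
      (∀ v : (Fin n ⊕ Fin n) ⊕ (Fin n ⊕ Fin n) → ℝ,
        0 ≤ v ⬝ᵥ (Matrix.fromBlocks
            (Matrix.fromBlocks Ri 1 1 Si)
            (Matrix.fromBlocks Ri (Sj * Ri + Nj * Δ * Miᵀ)ᵀ 1 Sj)
            (Matrix.fromBlocks Ri 1 (Sj * Ri + Nj * Δ * Miᵀ) Sj)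
            (Matrix.fromBlocks Rj 1 1 Sj)).mulVec v) := by
  have hZ : IsUnit (fromBlocks (fromBlocks Ri 1 Miᵀ 0) 0 0 (fromBlocks Rj 1 Mjᵀ 0)) :=
    isUnit_fromBlocks_zero₂₁.2 ⟨isUnit_fromBlocks_one_zero _ (Mi.isUnit_transpose.2 hMi),
      isUnit_fromBlocks_one_zero _ (Mj.isUnit_transpose.2 hMj)⟩
  rw [← forall_dotProduct_mulVec_conj_nonneg_iff hZ, fromBlocks_diag_transpose_mul_mul,
    diag_block hRi hMNi hXi, diag_block hRj hMNj hXj, offDiag_block₁₂ hRi hSj hXj,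
    offDiag_block₂₁ hRi hSj hXjsym hXj]

/-- Convexification of the hysteresis switching boundary condition: under the
linearizing changes of variables `X_i·Z₁ᵢ = Z₂ᵢ` and `X_j·Z₁ⱼ = Z₂ⱼ` (with
invertible factors `M, N` satisfying `MNᵀ = I − RS`), positive semidefiniteness of
`[[X_i, A_rᵀX_j],[X_jA_r, X_j]]` with reset matrix `A_r = diag(I, Δ)` is
equivalent to positive semidefiniteness of the block matrix
`[[R_i, I, R_i, Δ̂ᵀ],[I, S_i, I, S_j],[R_i, I, R_j, I],[Δ̂, S_j, I, S_j]]`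
where `Δ̂ = S_j·R_i + N_j·Δ·M_iᵀ`. Positive semidefiniteness is expressed via the
quadratic form `xᵀPx ≥ 0` for all `x`. -/
theorem stmt_9
    (n : ℕ) (hn : 0 < n)
    (Ri Si Mi Ni Rj Sj Mj Nj Δ : Matrix (Fin n) (Fin n) ℝ)
    (hRi : Riᵀ = Ri) (hSi : Siᵀ = Si) (hRj : Rjᵀ = Rj) (hSj : Sjᵀ = Sj)
    (hMi : IsUnit Mi) (hNi : IsUnit Ni) (hMj : IsUnit Mj) (hNj : IsUnit Nj)
    (hMNi : Mi * Niᵀ = 1 - Ri * Si) (hMNj : Mj * Njᵀ = 1 - Rj * Sj)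
    (Xi Xj : Matrix (Fin n ⊕ Fin n) (Fin n ⊕ Fin n) ℝ)
    (hXisym : Xiᵀ = Xi) (hXjsym : Xjᵀ = Xj)
    (hXi : Xi * Matrix.fromBlocks Ri 1 Miᵀ 0 = Matrix.fromBlocks 1 Si 0 Niᵀ)
    (hXj : Xj * Matrix.fromBlocks Rj 1 Mjᵀ 0 = Matrix.fromBlocks 1 Sj 0 Njᵀ) :
    (∀ v : (Fin n ⊕ Fin n) ⊕ (Fin n ⊕ Fin n) → ℝ,
        0 ≤ v ⬝ᵥ (Matrix.fromBlocks Xi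
            ((Matrix.fromBlocks 1 0 0 Δ)ᵀ * Xj)
            (Xj * Matrix.fromBlocks 1 0 0 Δ) Xj).mulVec v) ↔
      (∀ v : (Fin n ⊕ Fin n) ⊕ (Fin n ⊕ Fin n) → ℝ,
        0 ≤ v ⬝ᵥ (Matrix.fromBlocks
            (Matrix.fromBlocks Ri 1 1 Si)
            (Matrix.fromBlocks Ri (Sj * Ri + Nj * Δ * Miᵀ)ᵀ 1 Sj)
            (Matrix.fromBlocks Ri 1 (Sj * Ri + Nj * Δ * Miᵀ) Sj)
            (Matrix.fromBlocks Rj 1 1 Sj)).mulVec v) :=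
  stmt_9_general n Ri Si Mi Ni Rj Sj Mj Nj Δ hRi hRj hSj hMi hMj hMNi hMNj Xi Xj hXjsym hXi hXj
end

section
/- Let m, k, l be positive integers, let Ψ be a symmetric m×m real matrix, and let U be a k×m real matrix and V an l×m real matrix. Then there exists a k×l real matrix K such that Ψ + UᵀKV + VᵀKᵀU is negative definite if and only if both of the following hold: (i) xᵀΨx < 0 for every nonzero x ∈ ℝᵐ with Ux = 0, and (ii) xᵀΨx < 0 for every nonzero x ∈ ℝᵐ with Vx = 0. -/
open Matrix Filter

namespace Stmt13Aux

variable {m k l : ℕ}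

lemma dot_self_nonneg {n : ℕ} (v : Fin n → ℝ) : 0 ≤ v ⬝ᵥ v :=
  Finset.sum_nonneg fun _ _ => mul_self_nonneg _

lemma dot_self_pos {n : ℕ} {v : Fin n → ℝ} (hv : v ≠ 0) : 0 < v ⬝ᵥ v :=
  lt_of_le_of_ne (dot_self_nonneg v) (Ne.symm (mt dotProduct_self_eq_zero.mp hv))

lemma dot_transpose_mulVec (U : Matrix (Fin k) (Fin m) ℝ) (x : Fin m → ℝ) (q : Fin k → ℝ) :
    x ⬝ᵥ Uᵀ *ᵥ q = U *ᵥ x ⬝ᵥ q := by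
  rw [dotProduct_mulVec, vecMul_transpose]

lemma bil_transpose {n : ℕ} (M : Matrix (Fin n) (Fin n) ℝ) (x y : Fin n → ℝ) :
    x ⬝ᵥ Mᵀ *ᵥ y = y ⬝ᵥ M *ᵥ x := by
  rw [dotProduct_mulVec, vecMul_transpose, dotProduct_comm]

lemma quad_UtU (U : Matrix (Fin k) (Fin m) ℝ) (x y : Fin m → ℝ) :
    x ⬝ᵥ (Uᵀ * U) *ᵥ y = U *ᵥ x ⬝ᵥ U *ᵥ y := by
  rw [← mulVec_mulVec, dot_transpose_mulVec]

/-- over ℝ, symmetric + positive quadratic form gives PosDef -/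
lemma posDef_of_quad {n : ℕ} {M : Matrix (Fin n) (Fin n) ℝ} (hsym : Mᵀ = M)
    (hq : ∀ x : Fin n → ℝ, x ≠ 0 → 0 < x ⬝ᵥ M *ᵥ x) : M.PosDef := by
  refine Matrix.PosDef.of_dotProduct_mulVec_pos ?_ ?_
  · show Mᴴ = M
    ext i j
    simp only [conjTranspose_apply, star_trivial]
    exact congrFun (congrFun hsym i) j
  · intro x hx
    simpa using hq x hx

lemma posDef_quad_pos {n : ℕ} {M : Matrix (Fin n) (Fin n) ℝ} (hM : M.PosDef)
    {x : Fin n → ℝ} (hx : x ≠ 0) : 0 < x ⬝ᵥ M *ᵥ x := by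
  simpa using hM.dotProduct_mulVec_pos hx

lemma posDef_quad_nonneg {n : ℕ} {M : Matrix (Fin n) (Fin n) ℝ} (hM : M.PosDef)
    (x : Fin n → ℝ) : 0 ≤ x ⬝ᵥ M *ᵥ x := by
  by_cases hx : x = 0
  · simp [hx]
  · exact (posDef_quad_pos hM hx).le

/-- Core construction: assuming the Finsler-scaled bounds with constant 1. -/
lemma core (Ψ : Matrix (Fin m) (Fin m) ℝ) (hΨ : Ψᵀ = Ψ)
    (U : Matrix (Fin k) (Fin m) ℝ) (V : Matrix (Fin l) (Fin m) ℝ)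
    (hU : ∀ x : Fin m → ℝ, x ≠ 0 → x ⬝ᵥ Ψ *ᵥ x < U *ᵥ x ⬝ᵥ U *ᵥ x)
    (hV : ∀ x : Fin m → ℝ, x ≠ 0 → x ⬝ᵥ Ψ *ᵥ x < V *ᵥ x ⬝ᵥ V *ᵥ x) :
    ∃ K : Matrix (Fin k) (Fin l) ℝ,
      ∀ x : Fin m → ℝ, x ≠ 0 → x ⬝ᵥ (Ψ + Uᵀ * K * V + Vᵀ * Kᵀ * U) *ᵥ x < 0 := by
  set M : Matrix (Fin m) (Fin m) ℝ := Uᵀ * U - Ψ with hMdef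
  have hMsym : Mᵀ = M := by
    rw [hMdef, transpose_sub, transpose_mul, transpose_transpose, hΨ]
  have hMpd : M.PosDef := by
    refine posDef_of_quad hMsym fun x hx => ?_
    have h1 := hU x hx
    rw [hMdef, sub_mulVec, dotProduct_sub, quad_UtU]
    linarith
  set Φ : Matrix (Fin m) (Fin m) ℝ := M⁻¹ with hΦdef
  have hΦpd : Φ.PosDef := hMpd.inv
  have hΦsym : Φᵀ = Φ := by rw [hΦdef, transpose_nonsing_inv, hMsym]
  have hMdet : IsUnit M.det := isUnit_iff_ne_zero.mpr hMpd.det_pos.ne'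
  have hMΦ : M * Φ = 1 := mul_nonsing_inv _ hMdet
  set H : Matrix (Fin l) (Fin l) ℝ := V * Φ * Vᵀ with hHdef
  have hHquad : ∀ z : Fin l → ℝ, z ⬝ᵥ H *ᵥ z = (Vᵀ *ᵥ z) ⬝ᵥ Φ *ᵥ (Vᵀ *ᵥ z) := by
    intro z
    rw [hHdef, ← mulVec_mulVec, ← mulVec_mulVec, dotProduct_mulVec, ← mulVec_transpose]
  have hHnn : ∀ z : Fin l → ℝ, 0 ≤ z ⬝ᵥ H *ᵥ z := fun z => by
    rw [hHquad]; exact posDef_quad_nonneg hΦpd _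
  have hHsym : Hᵀ = H := by
    rw [hHdef, transpose_mul, transpose_mul, transpose_transpose, hΦsym, Matrix.mul_assoc]
  set N : Matrix (Fin l) (Fin l) ℝ := H + 1 with hNdef
  have hNpd : N.PosDef := by
    refine posDef_of_quad (by rw [hNdef, transpose_add, hHsym, transpose_one]) fun x hx => ?_
    rw [hNdef, add_mulVec, one_mulVec, dotProduct_add]
    have := hHnn x
    have := dot_self_pos hx
    linarith
  set A : Matrix (Fin l) (Fin l) ℝ := N⁻¹ with hAdef
  have hNdet : IsUnit N.det := isUnit_iff_ne_zero.mpr hNpd.det_pos.ne'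
  have hNA : N * A = 1 := mul_nonsing_inv _ hNdet
  refine ⟨-(U * Φ * Vᵀ * A), fun x hx => ?_⟩
  set K : Matrix (Fin k) (Fin l) ℝ := -(U * Φ * Vᵀ * A) with hKdef
  set w : Fin l → ℝ := V *ᵥ x with hwdef
  set z : Fin l → ℝ := A *ᵥ w with hzdef
  set p : Fin m → ℝ := Φ *ᵥ (Vᵀ *ᵥ z) with hpdef
  set y : Fin m → ℝ := x - p with hydef
  -- cross term
  have e_cross : x ⬝ᵥ (Uᵀ * K * V) *ᵥ x = -(U *ᵥ x ⬝ᵥ U *ᵥ p) := by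
    rw [Matrix.mul_assoc, ← mulVec_mulVec, dot_transpose_mulVec, ← mulVec_mulVec]
    have hK : K *ᵥ (V *ᵥ x) = -(U *ᵥ p) := by
      rw [hKdef, neg_mulVec, hpdef, hzdef, hwdef]
      rw [← mulVec_mulVec, ← mulVec_mulVec, ← mulVec_mulVec]
    rw [hK, dotProduct_neg]
  have e_cross2 : x ⬝ᵥ (Vᵀ * Kᵀ * U) *ᵥ x = x ⬝ᵥ (Uᵀ * K * V) *ᵥ x := by
    have ht : Vᵀ * Kᵀ * U = (Uᵀ * K * V)ᵀ := by
      rw [transpose_mul, transpose_mul, transpose_transpose, Matrix.mul_assoc]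
    rw [ht, bil_transpose]
  have eQ : x ⬝ᵥ (Ψ + Uᵀ * K * V + Vᵀ * Kᵀ * U) *ᵥ x
      = x ⬝ᵥ Ψ *ᵥ x - 2 * (U *ᵥ x ⬝ᵥ U *ᵥ p) := by
    rw [add_mulVec, add_mulVec, dotProduct_add, dotProduct_add, e_cross2, e_cross]
    ring
  have hMp : M *ᵥ p = Vᵀ *ᵥ z := by
    rw [hpdef, mulVec_mulVec, hMΦ, one_mulVec]
  have hUtU : Uᵀ * U = M + Ψ := by rw [hMdef, sub_add_cancel]
  have e1 : U *ᵥ x ⬝ᵥ U *ᵥ p = w ⬝ᵥ z + x ⬝ᵥ Ψ *ᵥ p := by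
    rw [← quad_UtU, hUtU, add_mulVec, dotProduct_add, hMp, dot_transpose_mulVec, ← hwdef]
  have hwNz : w = H *ᵥ z + z := by
    have h1 : w = N *ᵥ z := by rw [hzdef, mulVec_mulVec, hNA, one_mulVec]
    rw [h1, hNdef, add_mulVec, one_mulVec]
  have e2 : w ⬝ᵥ z = z ⬝ᵥ H *ᵥ z + z ⬝ᵥ z := by
    rw [hwNz, add_dotProduct, dotProduct_comm (H *ᵥ z) z]
  have esym : ∀ a b : Fin m → ℝ, a ⬝ᵥ Ψ *ᵥ b = b ⬝ᵥ Ψ *ᵥ a := by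
    intro a b
    calc a ⬝ᵥ Ψ *ᵥ b = a ⬝ᵥ Ψᵀ *ᵥ b := by rw [hΨ]
      _ = b ⬝ᵥ Ψ *ᵥ a := bil_transpose _ _ _
  have ey : y ⬝ᵥ Ψ *ᵥ y = x ⬝ᵥ Ψ *ᵥ x - 2 * (x ⬝ᵥ Ψ *ᵥ p) + p ⬝ᵥ Ψ *ᵥ p := by
    rw [hydef, mulVec_sub, dotProduct_sub, sub_dotProduct, sub_dotProduct, esym p x]
    ring
  have hVp : V *ᵥ p = H *ᵥ z := by
    rw [hpdef, mulVec_mulVec, mulVec_mulVec, hHdef, Matrix.mul_assoc]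
  have ep : p ⬝ᵥ Ψ *ᵥ p = U *ᵥ p ⬝ᵥ U *ᵥ p - z ⬝ᵥ H *ᵥ z := by
    have hΨeq : Ψ = Uᵀ * U - M := by rw [hMdef, sub_sub_cancel]
    have h3 : p ⬝ᵥ M *ᵥ p = z ⬝ᵥ H *ᵥ z := by
      rw [hMp, dot_transpose_mulVec, hVp, dotProduct_comm]
    rw [hΨeq, sub_mulVec, dotProduct_sub, quad_UtU, h3]
  have eVy : V *ᵥ y = z := by
    rw [hydef, mulVec_sub, hVp, ← hwdef, hwNz]
    abel
  have eQ2 : x ⬝ᵥ (Ψ + Uᵀ * K * V + Vᵀ * Kᵀ * U) *ᵥ x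
      = y ⬝ᵥ Ψ *ᵥ y - U *ᵥ p ⬝ᵥ U *ᵥ p - z ⬝ᵥ H *ᵥ z - 2 * (z ⬝ᵥ z) := by
    rw [eQ, e1, e2]
    linarith [ey, ep]
  rw [eQ2]
  have hznn := dot_self_nonneg z
  have hUpnn := dot_self_nonneg (U *ᵥ p)
  have hHz := hHnn z
  by_cases hy : y = 0
  · have hxp : x = p := by rwa [hydef, sub_eq_zero] at hy
    have hz0 : z ≠ 0 := by
      intro h0
      apply hx
      rw [hxp, hpdef, h0, mulVec_zero, mulVec_zero]
    have hzpos := dot_self_pos hz0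
    rw [hy]
    simp only [zero_dotProduct]
    linarith
  · have h1 : y ⬝ᵥ Ψ *ᵥ y < V *ᵥ y ⬝ᵥ V *ᵥ y := hV y hy
    rw [eVy] at h1
    linarith

lemma quad_smul (Ψ : Matrix (Fin m) (Fin m) ℝ) (c : ℝ) (x : Fin m → ℝ) :
    (c • x) ⬝ᵥ Ψ *ᵥ (c • x) = c ^ 2 * (x ⬝ᵥ Ψ *ᵥ x) := by
  rw [mulVec_smul, dotProduct_smul, smul_dotProduct, smul_eq_mul, smul_eq_mul]
  ring

lemma gq_smul (U : Matrix (Fin k) (Fin m) ℝ) (c : ℝ) (x : Fin m → ℝ) :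
    U *ᵥ (c • x) ⬝ᵥ U *ᵥ (c • x) = c ^ 2 * (U *ᵥ x ⬝ᵥ U *ᵥ x) := by
  rw [mulVec_smul, dotProduct_smul, smul_dotProduct, smul_eq_mul, smul_eq_mul]
  ring

lemma continuous_quad (Ψ : Matrix (Fin m) (Fin m) ℝ) :
    Continuous fun x : Fin m → ℝ => x ⬝ᵥ Ψ *ᵥ x := by
  simp only [dotProduct, mulVec]
  exact continuous_finset_sum _ fun i _ =>
    (continuous_apply i).mul (continuous_finset_sum _ fun j _ =>
      continuous_const.mul (continuous_apply j))

lemma continuous_gq (U : Matrix (Fin k) (Fin m) ℝ) :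
    Continuous fun x : Fin m → ℝ => U *ᵥ x ⬝ᵥ U *ᵥ x := by
  simp only [dotProduct, mulVec]
  exact continuous_finset_sum _ fun i _ =>
    (continuous_finset_sum _ fun j _ => continuous_const.mul (continuous_apply j)).mul
      (continuous_finset_sum _ fun j _ => continuous_const.mul (continuous_apply j))

/-- Finsler's lemma. -/
lemma finsler (Ψ : Matrix (Fin m) (Fin m) ℝ) (U : Matrix (Fin k) (Fin m) ℝ)
    (h : ∀ x : Fin m → ℝ, x ≠ 0 → U *ᵥ x = 0 → x ⬝ᵥ Ψ *ᵥ x < 0) :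
    ∃ σ : ℝ, 0 < σ ∧ ∀ x : Fin m → ℝ, x ≠ 0 →
      x ⬝ᵥ Ψ *ᵥ x < σ * (U *ᵥ x ⬝ᵥ U *ᵥ x) := by
  by_contra hc
  push_neg at hc
  have key : ∀ n : ℕ, ∃ x : Fin m → ℝ, ‖x‖ = 1 ∧
      ((n : ℝ) + 1) * (U *ᵥ x ⬝ᵥ U *ᵥ x) ≤ x ⬝ᵥ Ψ *ᵥ x := by
    intro n
    obtain ⟨x, hx0, hx⟩ := hc ((n : ℝ) + 1) (by positivity)
    refine ⟨‖x‖⁻¹ • x, ?_, ?_⟩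
    · rw [norm_smul, norm_inv, norm_norm, inv_mul_cancel₀ (norm_ne_zero_iff.mpr hx0)]
    · rw [quad_smul, gq_smul]
      have hc2 : (0:ℝ) ≤ ‖x‖⁻¹ ^ 2 := by positivity
      calc ((n : ℝ) + 1) * (‖x‖⁻¹ ^ 2 * (U *ᵥ x ⬝ᵥ U *ᵥ x))
          = ‖x‖⁻¹ ^ 2 * (((n : ℝ) + 1) * (U *ᵥ x ⬝ᵥ U *ᵥ x)) := by ring
        _ ≤ ‖x‖⁻¹ ^ 2 * (x ⬝ᵥ Ψ *ᵥ x) := mul_le_mul_of_nonneg_left hx hc2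
  choose u hu1 hu2 using key
  have hsph : ∀ n, u n ∈ Metric.sphere (0 : Fin m → ℝ) 1 := fun n =>
    mem_sphere_zero_iff_norm.mpr (hu1 n)
  obtain ⟨y, hy, φ, hφ, hlim⟩ :=
    (isCompact_sphere (0 : Fin m → ℝ) 1).tendsto_subseq hsph
  have hy1 : ‖y‖ = 1 := mem_sphere_zero_iff_norm.mp hy
  have hy0 : y ≠ 0 := by
    intro h0; rw [h0, norm_zero] at hy1; norm_num at hy1
  have hf : Tendsto (fun n => u (φ n) ⬝ᵥ Ψ *ᵥ u (φ n)) atTop (nhds (y ⬝ᵥ Ψ *ᵥ y)) :=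
    ((continuous_quad Ψ).tendsto y).comp hlim
  have hg : Tendsto (fun n => U *ᵥ u (φ n) ⬝ᵥ U *ᵥ u (φ n)) atTop
      (nhds (U *ᵥ y ⬝ᵥ U *ᵥ y)) :=
    ((continuous_gq U).tendsto y).comp hlim
  have hdenom : Tendsto (fun n => ((φ n : ℝ) + 1)) atTop atTop :=
    tendsto_atTop_add_const_right _ _
      (tendsto_natCast_atTop_atTop.comp hφ.tendsto_atTop)
  have hpos : ∀ n : ℕ, (0:ℝ) < (φ n : ℝ) + 1 := fun n => by positivity
  have hbound : ∀ n, U *ᵥ u (φ n) ⬝ᵥ U *ᵥ u (φ n) ≤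
      (u (φ n) ⬝ᵥ Ψ *ᵥ u (φ n)) / ((φ n : ℝ) + 1) := fun n =>
    (le_div_iff₀' (hpos n)).mpr (hu2 (φ n))
  have hto0 : Tendsto (fun n => (u (φ n) ⬝ᵥ Ψ *ᵥ u (φ n)) / ((φ n : ℝ) + 1)) atTop
      (nhds 0) := hf.div_atTop hdenom
  have hgy : U *ᵥ y ⬝ᵥ U *ᵥ y ≤ 0 :=
    le_of_tendsto_of_tendsto hg hto0 (Filter.Eventually.of_forall hbound)
  have hgy0 : U *ᵥ y ⬝ᵥ U *ᵥ y = 0 := le_antisymm hgy (dot_self_nonneg _)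
  have hUy : U *ᵥ y = 0 := dotProduct_self_eq_zero.mp hgy0
  have hfy : y ⬝ᵥ Ψ *ᵥ y < 0 := h y hy0 hUy
  have hfy' : (0:ℝ) ≤ y ⬝ᵥ Ψ *ᵥ y := by
    refine ge_of_tendsto' hf fun n => ?_
    have h1 := hu2 (φ n)
    have h2 := dot_self_nonneg (U *ᵥ u (φ n))
    nlinarith [hpos n]
  linarith


end Stmt13Aux

open Stmt13Aux

/-- Elimination (Projection) Lemma: for symmetric `Ψ` there exists `K` making
`Ψ + UᵀKV + VᵀKᵀU` negative definite iff `Ψ` is negative definite on the kernels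
of `U` and of `V`. Negative definiteness is expressed via the quadratic form
`xᵀMx < 0` for all nonzero `x`. -/
theorem stmt_13
    (m k l : ℕ) (hm : 0 < m) (hk : 0 < k) (hl : 0 < l)
    (Ψ : Matrix (Fin m) (Fin m) ℝ) (hΨ : Ψᵀ = Ψ)
    (U : Matrix (Fin k) (Fin m) ℝ) (V : Matrix (Fin l) (Fin m) ℝ) :
    (∃ K : Matrix (Fin k) (Fin l) ℝ,
        ∀ x : Fin m → ℝ, x ≠ 0 →
          x ⬝ᵥ (Ψ + Uᵀ * K * V + Vᵀ * Kᵀ * U).mulVec x < 0) ↔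
      ((∀ x : Fin m → ℝ, x ≠ 0 → U.mulVec x = 0 → x ⬝ᵥ Ψ.mulVec x < 0) ∧
        (∀ x : Fin m → ℝ, x ≠ 0 → V.mulVec x = 0 → x ⬝ᵥ Ψ.mulVec x < 0)) := by
  constructor
  · rintro ⟨K, hK⟩
    have cross2 : ∀ x : Fin m → ℝ, x ⬝ᵥ (Vᵀ * Kᵀ * U) *ᵥ x = x ⬝ᵥ (Uᵀ * K * V) *ᵥ x := by
      intro x
      have ht : Vᵀ * Kᵀ * U = (Uᵀ * K * V)ᵀ := by
        rw [transpose_mul, transpose_mul, transpose_transpose, Matrix.mul_assoc]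
      rw [ht, bil_transpose]
    have cross1 : ∀ x : Fin m → ℝ, x ⬝ᵥ (Uᵀ * K * V) *ᵥ x = U *ᵥ x ⬝ᵥ K *ᵥ (V *ᵥ x) := by
      intro x
      rw [Matrix.mul_assoc, ← mulVec_mulVec, dot_transpose_mulVec, ← mulVec_mulVec]
    constructor
    · intro x hx h0
      have h1 := hK x hx
      rw [add_mulVec, add_mulVec, dotProduct_add, dotProduct_add, cross2, cross1,
        h0, zero_dotProduct] at h1
      linarith
    · intro x hx h0
      have h1 := hK x hx
      rw [add_mulVec, add_mulVec, dotProduct_add, dotProduct_add, cross2, cross1,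
        h0, mulVec_zero, dotProduct_zero] at h1
      linarith
  · rintro ⟨h1, h2⟩
    obtain ⟨σ, hσ, hσ2⟩ := finsler Ψ U h1
    obtain ⟨τ, hτ, hτ2⟩ := finsler Ψ V h2
    set c : ℝ := Real.sqrt σ with hcdef
    set d : ℝ := Real.sqrt τ with hddef
    have hc : 0 < c := Real.sqrt_pos.mpr hσ
    have hd : 0 < d := Real.sqrt_pos.mpr hτ
    have hc2 : c ^ 2 = σ := Real.sq_sqrt hσ.le
    have hd2 : d ^ 2 = τ := Real.sq_sqrt hτ.le
    set U₁ : Matrix (Fin k) (Fin m) ℝ := c • U with hU1def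
    set V₁ : Matrix (Fin l) (Fin m) ℝ := d • V with hV1def
    have hU1 : ∀ x : Fin m → ℝ, x ≠ 0 → x ⬝ᵥ Ψ *ᵥ x < U₁ *ᵥ x ⬝ᵥ U₁ *ᵥ x := by
      intro x hx
      have h := hσ2 x hx
      rw [hU1def, smul_mulVec, dotProduct_smul, smul_dotProduct, smul_eq_mul,
        smul_eq_mul, ← mul_assoc, ← pow_two, hc2]
      exact h
    have hV1 : ∀ x : Fin m → ℝ, x ≠ 0 → x ⬝ᵥ Ψ *ᵥ x < V₁ *ᵥ x ⬝ᵥ V₁ *ᵥ x := by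
      intro x hx
      have h := hτ2 x hx
      rw [hV1def, smul_mulVec, dotProduct_smul, smul_dotProduct, smul_eq_mul,
        smul_eq_mul, ← mul_assoc, ← pow_two, hd2]
      exact h
    obtain ⟨K₁, hK₁⟩ := core Ψ hΨ U₁ V₁ hU1 hV1
    refine ⟨(c * d) • K₁, fun x hx => ?_⟩
    have hmat : Ψ + Uᵀ * ((c * d) • K₁) * V + Vᵀ * ((c * d) • K₁)ᵀ * U
        = Ψ + U₁ᵀ * K₁ * V₁ + V₁ᵀ * K₁ᵀ * U₁ := by
      rw [hU1def, hV1def, transpose_smul, transpose_smul, transpose_smul]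
      rw [Matrix.mul_smul, Matrix.smul_mul, Matrix.smul_mul, Matrix.smul_mul,
        Matrix.mul_smul, Matrix.smul_mul, Matrix.smul_mul, Matrix.smul_mul]
      rw [Matrix.mul_smul, Matrix.mul_smul, smul_smul, smul_smul, mul_comm d c]
    rw [hmat]
    exact hK₁ x hx
end

section
/- Let n, m, p be positive integers, γ > 0, T > 0. Let A, B, C, D be constant real matrices of sizes n×n, n×m, p×n, p×m, and let X be a symmetric n×n real matrix such that the block matrix [[AᵀX + XA, XB, Cᵀ],[BᵀX, −γI_m, Dᵀ],[C, D, −γI_p]] is negative semidefinite. Let w : [0,T] → ℝᵐ be continuous and let x : [0,T] → ℝⁿ be differentiable with x(0) = 0 and x′(t) = A·x(t) + B·w(t) for all t ∈ [0,T], and define z(t) = C·x(t) + D·w(t). If X is positive semidefinite, then ∫₀ᵀ ‖z(t)‖² dt ≤ γ² · ∫₀ᵀ ‖w(t)‖² dt. -/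
open Matrix

lemma aux_hasDerivAt_dot {k : ℕ} {f g : ℝ → Fin k → ℝ} {f' g' : Fin k → ℝ} {t : ℝ}
    (hf : HasDerivAt f f' t) (hg : HasDerivAt g g' t) :
    HasDerivAt (fun s => f s ⬝ᵥ g s) (f' ⬝ᵥ g t + f t ⬝ᵥ g') t := by
  simp only [dotProduct]
  rw [← Finset.sum_add_distrib]
  exact HasDerivAt.fun_sum fun i _ =>
    ((hasDerivAt_pi.1 hf i).mul (hasDerivAt_pi.1 hg i))

lemma aux_contOn_dot {k : ℕ} {s : Set ℝ} {f g : ℝ → Fin k → ℝ}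
    (hf : ContinuousOn f s) (hg : ContinuousOn g s) :
    ContinuousOn (fun t => f t ⬝ᵥ g t) s := by
  simp only [dotProduct]
  exact continuousOn_finset_sum _ fun i _ =>
    (((continuous_apply i).comp_continuousOn hf).mul
      ((continuous_apply i).comp_continuousOn hg))

lemma aux_dot_transpose {k l : ℕ} (M : Matrix (Fin k) (Fin l) ℝ) (u : Fin l → ℝ) (v : Fin k → ℝ) :
    u ⬝ᵥ Mᵀ.mulVec v = M.mulVec u ⬝ᵥ v := by
  rw [Matrix.dotProduct_mulVec, Matrix.vecMul_transpose]

/-- Integral ℒ₂-gain bound (bounded real lemma, sufficiency direction) at a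
frozen parameter value: feasibility of the ℋ∞-type LMI
`[[AᵀX + XA, XB, Cᵀ],[BᵀX, −γI, Dᵀ],[C, D, −γI]] ⪯ 0` with positive semidefinite
storage matrix `X` implies that the linear system `ẋ = Ax + Bw`, `z = Cx + Dw`
with zero initial state has ℒ₂ gain at most `γ` on `[0, T]`.
Here `v ⬝ᵥ v` is the squared Euclidean norm `‖v‖²`. -/
theorem stmt_16
    (n m p : ℕ) (hn : 0 < n) (hm : 0 < m) (hp : 0 < p)
    (γ T : ℝ) (hγ : 0 < γ) (hT : 0 < T)
    (A : Matrix (Fin n) (Fin n) ℝ) (B : Matrix (Fin n) (Fin m) ℝ)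
    (C : Matrix (Fin p) (Fin n) ℝ) (D : Matrix (Fin p) (Fin m) ℝ)
    (X : Matrix (Fin n) (Fin n) ℝ) (hXsym : Xᵀ = X)
    (hLMI : ∀ v : Fin n ⊕ (Fin m ⊕ Fin p) → ℝ,
      v ⬝ᵥ (Matrix.fromBlocks (Aᵀ * X + X * A)
          (Matrix.fromCols (X * B) Cᵀ)
          (Matrix.fromRows (Bᵀ * X) C)
          (Matrix.fromBlocks (-γ • (1 : Matrix (Fin m) (Fin m) ℝ)) Dᵀ D
            (-γ • (1 : Matrix (Fin p) (Fin p) ℝ)))).mulVec v ≤ 0)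
    (hXpsd : ∀ v : Fin n → ℝ, 0 ≤ v ⬝ᵥ X.mulVec v)
    (w : ℝ → (Fin m → ℝ)) (hw : ContinuousOn w (Set.Icc (0 : ℝ) T))
    (x : ℝ → (Fin n → ℝ)) (hx0 : x 0 = 0)
    (hx : ∀ t ∈ Set.Icc (0 : ℝ) T,
      HasDerivAt x (A.mulVec (x t) + B.mulVec (w t)) t)
    (z : ℝ → (Fin p → ℝ))
    (hz : ∀ t, z t = C.mulVec (x t) + D.mulVec (w t)) :
    ∫ t in (0 : ℝ)..T, z t ⬝ᵥ z t ≤ γ ^ 2 * ∫ t in (0 : ℝ)..T, w t ⬝ᵥ w t := by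
  set xd : ℝ → Fin n → ℝ := fun t => A.mulVec (x t) + B.mulVec (w t) with hxd
  set V : ℝ → ℝ := fun t => x t ⬝ᵥ X.mulVec (x t) with hV
  set Vd : ℝ → ℝ := fun t => xd t ⬝ᵥ X.mulVec (x t) + x t ⬝ᵥ X.mulVec (xd t) with hVd
  -- derivative of V
  have hderiv : ∀ t ∈ Set.Icc (0:ℝ) T, HasDerivAt V (Vd t) t := by
    intro t ht
    have h1 : HasDerivAt (fun s => X.mulVec (x s)) (X.mulVec (xd t)) t := by
      rw [hasDerivAt_pi]
      intro i
      simp only [Matrix.mulVec, dotProduct]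
      exact HasDerivAt.fun_sum fun j _ => (hasDerivAt_pi.1 (hx t ht) j).const_mul (X i j)
    exact aux_hasDerivAt_dot (hx t ht) h1
  -- continuity facts
  have hxc : ContinuousOn x (Set.Icc (0:ℝ) T) :=
    fun t ht => (hx t ht).continuousAt.continuousWithinAt
  have hmv : ∀ {k l : ℕ} (M : Matrix (Fin k) (Fin l) ℝ),
      Continuous (M.mulVec : (Fin l → ℝ) → Fin k → ℝ) :=
    fun M => LinearMap.continuous_of_finiteDimensional M.mulVecLin
  have hxdc : ContinuousOn xd (Set.Icc (0:ℝ) T) :=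
    ((hmv A).comp_continuousOn hxc).add ((hmv B).comp_continuousOn hw)
  have hzc : ContinuousOn z (Set.Icc (0:ℝ) T) := by
    have : ContinuousOn (fun t => C.mulVec (x t) + D.mulVec (w t)) (Set.Icc (0:ℝ) T) :=
      ((hmv C).comp_continuousOn hxc).add ((hmv D).comp_continuousOn hw)
    exact this.congr fun t _ => hz t
  have hVdc : ContinuousOn Vd (Set.Icc (0:ℝ) T) :=
    (aux_contOn_dot hxdc ((hmv X).comp_continuousOn hxc)).add
      (aux_contOn_dot hxc ((hmv X).comp_continuousOn hxdc))
  have huIcc : Set.uIcc (0:ℝ) T = Set.Icc 0 T := Set.uIcc_of_le hT.le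
  have hiVd : IntervalIntegrable Vd MeasureTheory.volume 0 T :=
    (huIcc ▸ hVdc).intervalIntegrable
  have hizz : IntervalIntegrable (fun t => z t ⬝ᵥ z t) MeasureTheory.volume 0 T :=
    (huIcc ▸ (aux_contOn_dot hzc hzc)).intervalIntegrable
  have hiww : IntervalIntegrable (fun t => w t ⬝ᵥ w t) MeasureTheory.volume 0 T :=
    (huIcc ▸ (aux_contOn_dot hw hw)).intervalIntegrable
  -- key pointwise inequality
  have key : ∀ t ∈ Set.Icc (0:ℝ) T,
      Vd t + γ⁻¹ * (z t ⬝ᵥ z t) - γ * (w t ⬝ᵥ w t) ≤ 0 := by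
    intro t ht
    have hq := hLMI (Sum.elim (x t) (Sum.elim (w t) (γ⁻¹ • z t)))
    set a := x t
    set b := w t
    set c := γ⁻¹ • z t with hc
    have hexp : Sum.elim a (Sum.elim b c) ⬝ᵥ (Matrix.fromBlocks (Aᵀ * X + X * A)
          (Matrix.fromCols (X * B) Cᵀ)
          (Matrix.fromRows (Bᵀ * X) C)
          (Matrix.fromBlocks (-γ • (1 : Matrix (Fin m) (Fin m) ℝ)) Dᵀ D
            (-γ • (1 : Matrix (Fin p) (Fin p) ℝ)))).mulVec (Sum.elim a (Sum.elim b c))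
        = Vd t + γ⁻¹ * (z t ⬝ᵥ z t) - γ * (b ⬝ᵥ b) := by
      have hγ0 : γ ≠ 0 := ne_of_gt hγ
      simp only [Matrix.fromBlocks_mulVec, Matrix.fromCols_mulVec_sumElim,
        Matrix.fromRows_mulVec, Sum.elim_comp_inl, Sum.elim_comp_inr,
        sumElim_dotProduct_sumElim, dotProduct_add, add_dotProduct,
        Matrix.add_mulVec, ← Matrix.mulVec_mulVec, aux_dot_transpose,
        neg_smul, Matrix.neg_mulVec, Matrix.smul_mulVec, Matrix.one_mulVec,
        dotProduct_neg, neg_dotProduct, dotProduct_smul, smul_dotProduct,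
        smul_eq_mul, hVd, hxd, hc, hz t, Matrix.mulVec_smul, Matrix.mulVec_add,
        smul_add]
      field_simp
      ring
    rw [hexp] at hq
    linarith
  -- FTC
  have hFTC : ∫ t in (0:ℝ)..T, Vd t = V T - V 0 :=
    intervalIntegral.integral_eq_sub_of_hasDerivAt
      (fun t ht => hderiv t (huIcc ▸ ht)) hiVd
  have hV0 : V 0 = 0 := by simp [hV, hx0]
  have hVT : 0 ≤ V T := hXpsd (x T)
  have hmono : ∫ t in (0:ℝ)..T, Vd t ≤
      ∫ t in (0:ℝ)..T, (γ * (w t ⬝ᵥ w t) - γ⁻¹ * (z t ⬝ᵥ z t)) := by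
    apply intervalIntegral.integral_mono_on hT.le hiVd
      ((hiww.const_mul γ).sub (hizz.const_mul γ⁻¹))
    intro t ht
    linarith [key t ht]
  rw [intervalIntegral.integral_sub (hiww.const_mul γ) (hizz.const_mul γ⁻¹),
    intervalIntegral.integral_const_mul, intervalIntegral.integral_const_mul] at hmono
  have h0 : 0 ≤ (γ * ∫ t in (0:ℝ)..T, w t ⬝ᵥ w t) - γ⁻¹ * ∫ t in (0:ℝ)..T, z t ⬝ᵥ z t := by
    rw [hFTC, hV0] at hmono; linarith
  have h1 : γ * (γ⁻¹ * ∫ t in (0:ℝ)..T, z t ⬝ᵥ z t) ≤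
      γ * (γ * ∫ t in (0:ℝ)..T, w t ⬝ᵥ w t) :=
    mul_le_mul_of_nonneg_left (by linarith) hγ.le
  rw [← mul_assoc, mul_inv_cancel₀ (ne_of_gt hγ), one_mul] at h1
  nlinarith [h1]
end
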